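/- For a saturated empire E and each error place p ∈ Err, there exists no state q ∈ Q such that p lies in some region of terr(q). -/

import Mathlib

/-!
Common semantic framework for "The Ghosts of Empires":
Petri programs, Hoare triples, invariant domains, Owicki-Gries annotations,
territories, empires, saturated empires, focus.
-/

namespace GhostsOfEmpires

/-- Reachable states of a (partial) state machine with transition alphabet `T`. -/
inductive EmpReach {Q T : Type*} (q0 : Q) (δ : Q → T → Option Q) : Q → Prop
  | init : EmpReach q0 δ q0
  | step {q : Q} {t : T} {q' : Q} : EmpReach q0 δ q → δ q t = some q' → EmpReach q0 δ q'

/-- Restriction of a partial transition function to the reachable part. -/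
def restrictδ {Q T : Type*} (q0 : Q) (δ : Q → T → Option Q)
    (q : {q : Q // EmpReach q0 δ q}) (t : T) : Option {q : Q // EmpReach q0 δ q} :=
  match h : δ q.val t with
  | none => none
  | some q' => some ⟨q', EmpReach.step q.property h⟩

/-- A Petri program: places, transitions, flow relation (given by `pre`/`post`),
initial marking, statement labels, error places, and a semantics for statements
(formulas over the program variables are modelled semantically as predicates on `State`,
the type of valuations of the program variables). Since the program is assumed one-safe,
markings are identified with sets of places. -/
structure PetriNet (Place Trans Stmt State : Type*) where
  pre : Trans → Set Place
  post : Trans → Set Place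
  mInit : Set Place
  label : Trans → Stmt
  err : Set Place
  sem : Stmt → State → State → Prop

/-- Owicki-Gries annotation: ghost state type `GS` (the product of the domains of the
ghost variables), invariant mapping `ω` (formulas over program and ghost variables),
ghost update mapping `γ` (executed after the statement of the transition), and
initial ghost valuation `ρ`. -/
structure OG (Place Trans State GS : Type*) where
  ω : Place → State → GS → Prop
  γ : Trans → State → GS → GS
  ρ : GS

/-- The data of an empire: a state machine with laws and territories. -/
structure EmpireData (Place Trans State Q : Type*) where
  qInit : Q
  δ : Q → Trans → Option Q
  law : Q → State → Prop
  terr : Q → Set (Set Place)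

/-- `Q_p`: the set of empire states whose territory contains `p` in some region. -/
def Qp {Place Trans State Q : Type*} (E : EmpireData Place Trans State Q) (p : Place) :
    Set Q :=
  {q | ∃ r ∈ E.terr q, p ∈ r}

/-- The imperial Owicki-Gries annotation of an empire: one ghost variable `g` ranging
over the states `Q`, initialized to `qInit`, updated according to `δ`, and
`ω(p) = ⋁_{q ∈ Q_p} (g = q ∧ law q)`. -/
def imperialOG {Place Trans State Q : Type*} (E : EmpireData Place Trans State Q) :
    OG Place Trans State Q where
  ω := fun p s g => ∃ q ∈ Qp E p, g = q ∧ E.law q s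
  γ := fun t _ g => (E.δ g t).getD g
  ρ := E.qInit

/-- Restriction of an empire given by raw data to its reachable part. -/
def restrictEmpire {Place Trans State Q : Type*} (q0 : Q) (δ0 : Q → Trans → Option Q)
    (law : Q → State → Prop) (terr : Q → Set (Set Place)) :
    EmpireData Place Trans State {q : Q // EmpReach q0 δ0 q} where
  qInit := ⟨q0, EmpReach.init⟩
  δ := restrictδ q0 δ0
  law := fun q => law q.val
  terr := fun q => terr q.val

/-- `m ∈ ⟦τ⟧`: `m` is derived by taking exactly one place from each region of `τ`. -/
def InTreaty {Place : Type*} (τ : Set (Set Place)) (m : Set Place) : Prop :=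
  ∃ f : Set Place → Place, (∀ r ∈ τ, f r ∈ r) ∧ m = {p | ∃ r ∈ τ, p = f r}

namespace PetriNet

variable {Place Trans Stmt State : Type*} (N : PetriNet Place Trans Stmt State)

/-- `m ▷t m'`: transition `t` is enabled in `m` and firing it yields `m'`. -/
def fires (m : Set Place) (t : Trans) (m' : Set Place) : Prop :=
  N.pre t ⊆ m ∧ m' = (m \ N.pre t) ∪ N.post t

/-- Firing sequences. -/
inductive FiringSeq : Set Place → List Trans → Set Place → Prop
  | nil (m : Set Place) : FiringSeq m [] m
  | cons {m m' m'' : Set Place} {t : Trans} {ts : List Trans} :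
      N.fires m t m' → FiringSeq m' ts m'' → FiringSeq m (t :: ts) m''

/-- A marking is reachable if some firing sequence from the initial marking ends in it. -/
def Reachable (m : Set Place) : Prop := ∃ ts, N.FiringSeq N.mInit ts m

/-- The Hoare triple `{φ} st {ψ}` holds. -/
def Hoare (φ : State → Prop) (st : Stmt) (ψ : State → Prop) : Prop :=
  ∀ s s', φ s → N.sem st s s' → ψ s'

/-- Semantics of a sequence of statements. -/
inductive SeqSem : List Stmt → State → State → Prop
  | nil (s : State) : SeqSem [] s s
  | cons {st : Stmt} {sts : List Stmt} {s s' s'' : State} :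
      N.sem st s s' → SeqSem sts s' s'' → SeqSem (st :: sts) s s''

/-- The Petri program is correct: for every firing sequence reaching a marking that
contains an error place, the Hoare triple `{⊤} λ(t1)...λ(tn) {⊥}` holds. -/
def Correct : Prop :=
  ∀ ts m, N.FiringSeq N.mInit ts m → (m ∩ N.err).Nonempty →
    ∀ s s', N.SeqSem (List.map N.label ts) s s' → False

/-- `p` and `t` are co-marked. -/
def coMarked (p : Place) (t : Trans) : Prop :=
  p ∉ N.pre t ∧ ∃ m, N.Reachable m ∧ p ∈ m ∧ N.pre t ⊆ m

/-- Two places are co-related. -/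
def coRelated (p p' : Place) : Prop :=
  p ≠ p' ∧ ∃ m, N.Reachable m ∧ p ∈ m ∧ p' ∈ m

/-- A region: a nonempty set of places that are pairwise not co-related. -/
def IsRegion (r : Set Place) : Prop :=
  r.Nonempty ∧ ∀ p1 ∈ r, ∀ p2 ∈ r, ¬ N.coRelated p1 p2

/-- A territory: a set of pairwise disjoint regions all of whose treaty members are
reachable markings. -/
def IsTerritory (τ : Set (Set Place)) : Prop :=
  (∀ r ∈ τ, N.IsRegion r) ∧
  (∀ r1 ∈ τ, ∀ r2 ∈ τ, r1 ≠ r2 → r1 ∩ r2 = ∅) ∧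
  (∀ m, InTreaty τ m → N.Reachable m)

/-- `t` is enabled in the territory `τ`: every predecessor place lies in a distinct
region of `τ`. -/
def terrEnabled (t : Trans) (τ : Set (Set Place)) : Prop :=
  ∃ f : Place → Set Place, (∀ p ∈ N.pre t, f p ∈ τ ∧ p ∈ f p) ∧
    ∀ p1 ∈ N.pre t, ∀ p2 ∈ N.pre t, p1 ≠ p2 → f p1 ≠ f p2

/-- `τ ▷t τ'`: the firing relation on territories. -/
def terrFires (τ : Set (Set Place)) (t : Trans) (τ' : Set (Set Place)) : Prop :=
  ∃ f f' : Place → Set Place,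
    (∀ p ∈ N.pre t, f p ∈ τ ∧ p ∈ f p) ∧
    (∀ p1 ∈ N.pre t, ∀ p2 ∈ N.pre t, p1 ≠ p2 → f p1 ≠ f p2) ∧
    (∀ p ∈ N.post t, N.IsRegion (f' p) ∧ p ∈ f' p) ∧
    (∀ p1 ∈ N.post t, ∀ p2 ∈ N.post t, p1 ≠ p2 → f' p1 ≠ f' p2) ∧
    τ' = (τ \ {r | ∃ p ∈ N.pre t, r = f p}) ∪ {r | ∃ p ∈ N.post t, r = f' p}

/-- The bystander regions of `t` in `τ`. -/
def bystanders (t : Trans) (τ : Set (Set Place)) : Set (Set Place) :=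
  {r ∈ τ | r ∩ N.pre t = ∅}

/-- The replaced territory `replace(t,τ)`. -/
def replaceT (t : Trans) (τ : Set (Set Place)) : Set (Set Place) :=
  N.bystanders t τ ∪ {r | ∃ p ∈ N.post t, r = {p}}

/-- `τ` is extendable with `t`. -/
def extendable (t : Trans) (τ : Set (Set Place)) : Prop :=
  N.terrEnabled t τ ∧ (∃ p, N.pre t = {p}) ∧ (∃ p', N.post t = {p'}) ∧
    ∀ r ∈ τ, (r ∩ N.pre t).Nonempty → ∀ p'' ∈ r, ∀ p' ∈ N.post t, ¬ N.coRelated p' p''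

/-- The extended territory `extend(t,τ)`: the (unique) region meeting `•t` is enlarged
by the successor place. -/
def extendT (t : Trans) (τ : Set (Set Place)) : Set (Set Place) :=
  N.bystanders t τ ∪ {r' | ∃ r ∈ τ, (r ∩ N.pre t).Nonempty ∧ r' = r ∪ N.post t}

/-- An invariant domain for `N`: a finite set `A` of formulas (modelled semantically)
containing `⊥` and `⊤`, and a post operator such that `{φ} λ(t) {post(φ,t)}` always holds. -/
structure InvDomain where
  A : Set (State → Prop)
  postF : (State → Prop) → Trans → (State → Prop)
  finA : A.Finite
  bot_mem : (fun _ => False) ∈ A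
  top_mem : (fun _ => True) ∈ A
  post_mem : ∀ φ ∈ A, ∀ t, postF φ t ∈ A
  post_hoare : ∀ φ ∈ A, ∀ t, N.Hoare φ (N.label t) (postF φ t)

/-- Reachable abstract configurations, generically over a type `Φ` of laws with a post
operator `postA` and top element `φtop`. -/
inductive AbsReachG {Φ : Type*} (postA : Φ → Trans → Φ) (φtop : Φ) : Set Place → Φ → Prop
  | init : AbsReachG postA φtop N.mInit φtop
  | step {m : Set Place} {φ : Φ} {t : Trans} {m' : Set Place} :
      AbsReachG postA φtop m φ → N.fires m t m' → AbsReachG postA φtop m' (postA φ t)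

/-- The invariant domain is safe: every reachable abstract configuration at a marking
containing an error place has law equivalent to `⊥`. -/
def SafeDomain (D : InvDomain N) : Prop :=
  ∀ m φ, N.AbsReachG D.postF (fun _ => True) m φ → (m ∩ N.err).Nonempty → ∀ s, ¬ φ s

/-- Validity of an Owicki-Gries annotation: initial, inductive, interference-free, safe. -/
structure OGValid {GS : Type*} (og : OG Place Trans State GS) : Prop where
  initialCond : ∀ p ∈ N.mInit, ∀ s, og.ω p s og.ρ
  inductiveCond : ∀ t s g s', (∀ p ∈ N.pre t, og.ω p s g) →
    N.sem (N.label t) s s' → ∀ p ∈ N.post t, og.ω p s' (og.γ t s' g)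
  interferenceFree : ∀ t p, N.coMarked p t → ∀ s g s',
    og.ω p s g → (∀ p' ∈ N.pre t, og.ω p' s g) →
    N.sem (N.label t) s s' → og.ω p s' (og.γ t s' g)
  safeCond : ∀ p ∈ N.err, ∀ s g, ¬ og.ω p s g

/-- The naive Owicki-Gries annotation `OG_naive(A,post)`: the ghost state is the set of
places `p` whose boolean ghost variable `g_p` is true; `ω(p)` is the disjunction over all
reachable markings `m` containing `p` of `χ(m) ∧ β(m)`. -/
def naiveOG (D : InvDomain N) : OG Place Trans State (Set Place) where
  ω := fun p s g => ∃ m, N.Reachable m ∧ p ∈ m ∧ g = m ∧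
    ∃ φ, N.AbsReachG D.postF (fun _ => True) m φ ∧ φ s
  γ := fun t _ g => (g \ (N.pre t \ N.post t)) ∪ (N.post t \ N.pre t)
  ρ := N.mInit

/-- Validity of an empire. -/
structure ValidEmpire {Q : Type*} (E : EmpireData Place Trans State Q) : Prop where
  terrOK : ∀ q, N.IsTerritory (E.terr q)
  initialLaw : ∀ s, E.law E.qInit s
  initialTerr : InTreaty (E.terr E.qInit) N.mInit
  inductiveLaw : ∀ q t, N.terrEnabled t (E.terr q) →
    (∃ q', E.δ q t = some q' ∧ N.Hoare (E.law q) (N.label t) (E.law q')) ∨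
      N.Hoare (E.law q) (N.label t) (fun _ => False)
  inductiveTerr : ∀ q t q', E.δ q t = some q' → N.terrFires (E.terr q) t (E.terr q')
  safeCond : ∀ q, (∃ r ∈ E.terr q, (r ∩ N.err).Nonempty) → ∀ s, ¬ E.law q s

/-- The initial territory `τ_init = {{p} | p ∈ m_init}`. -/
def tauInit : Set (Set Place) := {r | ∃ p ∈ N.mInit, r = {p}}

/-- `SaturateG postA φ rb τ τ'` means `τ' ∈ saturate(φ, rb, τ)` (saturated successors). -/
inductive SaturateG {Φ : Type*} (postA : Φ → Trans → Φ) (φ : Φ) (rb : Set (Set Place)) :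
    Set (Set Place) → Set (Set Place) → Prop
  | base {τ : Set (Set Place)} :
      (¬ ∃ t, N.extendable t τ ∧ ¬ N.terrFires τ t τ ∧ postA φ t = φ ∧
        rb ⊆ N.bystanders t τ) →
      SaturateG postA φ rb τ τ
  | step {τ : Set (Set Place)} {t : Trans} {τ' : Set (Set Place)} :
      N.extendable t τ → ¬ N.terrFires τ t τ → postA φ t = φ →
      rb ⊆ N.bystanders t τ → SaturateG postA φ rb (N.extendT t τ) τ' →
      SaturateG postA φ rb τ τ'

/-- `(q0, δ0)` is the data of a saturated empire (before restriction to the reachable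
part), generically over a type `Φ` of laws with post operator `postA`, interpretation
`interp` and top element `φtop`. -/
structure IsSaturatedG {Φ : Type*} (postA : Φ → Trans → Φ) (interp : Φ → State → Prop)
    (φtop : Φ) (q0 : Set (Set Place) × Φ)
    (δ0 : Set (Set Place) × Φ → Trans → Option (Set (Set Place) × Φ)) : Prop where
  initCond : ∃ τ, N.SaturateG postA φtop ∅ N.tauInit τ ∧ q0 = (τ, φtop)
  undefCond : ∀ τ φ t, (¬ N.terrEnabled t τ ∨ ∀ s, ¬ interp (postA φ t) s) →
    δ0 (τ, φ) t = none
  selfCond : ∀ τ φ t, N.terrEnabled t τ → (∃ s, interp (postA φ t) s) →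
    N.terrFires τ t τ → postA φ t = φ → δ0 (τ, φ) t = some (τ, φ)
  stepCond : ∀ τ φ t, N.terrEnabled t τ → (∃ s, interp (postA φ t) s) →
    ¬ (N.terrFires τ t τ ∧ postA φ t = φ) →
    ∃ τ', N.SaturateG postA (postA φ t) (N.bystanders t τ) (N.replaceT t τ) τ' ∧
      δ0 (τ, φ) t = some (τ', postA φ t)

open Classical in
/-- The transition function of the naive empire. -/
noncomputable def naiveδ (D : InvDomain N) (q : Set (Set Place) × (State → Prop))
    (t : Trans) : Option (Set (Set Place) × (State → Prop)) :=
  if N.terrEnabled t q.1 ∧ ∃ s, D.postF q.2 t s then some (N.replaceT t q.1, D.postF q.2 t)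
  else none

/-- The naive empire `E_naive(A,post)`: the reachable part of the empire whose states are
pairs of territories and laws, with initial state `⟨τ_init, ⊤⟩`. -/
noncomputable def naiveEmpire (D : InvDomain N) :
    EmpireData Place Trans State
      {q : Set (Set Place) × (State → Prop) //
        EmpReach (N.tauInit, fun _ => True) (N.naiveδ D) q} :=
  restrictEmpire (N.tauInit, fun _ => True) (N.naiveδ D) Prod.snd Prod.fst

open Classical in
/-- The product post operator of a family of invariant domains, acting on vectors of
component formulas (the vector `φv` represents the conjunction `⋀_i φv i`). -/
noncomputable def prodPost {n : ℕ} (Ds : Fin n → InvDomain N)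
    (φv : Fin n → State → Prop) (t : Trans) : Fin n → State → Prop :=
  if ∀ i, ∃ s, (Ds i).postF (φv i) t s then fun i => (Ds i).postF (φv i) t
  else fun _ _ => False

/-- Safety of the product invariant domain. -/
def prodSafe {n : ℕ} (Ds : Fin n → InvDomain N) : Prop :=
  ∀ m φv, N.AbsReachG (N.prodPost Ds) (fun _ _ => True) m φv →
    (m ∩ N.err).Nonempty → ∀ s, ¬ ∀ i, φv i s

/-- A focus on a saturated empire (given by raw data `(q0, δ0)` over vector laws). -/
structure IsFocus {n : ℕ} (Ds : Fin n → InvDomain N)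
    (q0 : Set (Set Place) × (Fin n → State → Prop))
    (δ0 : Set (Set Place) × (Fin n → State → Prop) → Trans →
      Option (Set (Set Place) × (Fin n → State → Prop)))
    (ℓ : Set (Set Place) × (Fin n → State → Prop) → Set Place → Set (Fin n)) :
    Prop where
  safeCond : ∀ q, EmpReach q0 δ0 q → ∀ t, N.terrEnabled t q.1 → δ0 q t = none →
    ∃ r ∈ q.1, ∃ i, (r ∩ N.pre t).Nonempty ∧ (∀ s, ¬ (Ds i).postF (q.2 i) t s) ∧ i ∈ ℓ q r
  inductiveEdge : ∀ q q' t, EmpReach q0 δ0 q → δ0 q t = some q' →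
    ∀ r' ∈ q'.1, (r' ∩ N.post t).Nonempty → ∀ i ∈ ℓ q' r',
      ∃ r ∈ q.1, (r ∩ N.pre t).Nonempty ∧ i ∈ ℓ q r
  bystandersCond : ∀ q q' t, EmpReach q0 δ0 q → δ0 q t = some q' →
    ∀ r ∈ N.bystanders t q.1, ∀ i ∈ ℓ q' r, i ∈ ℓ q r

end PetriNet

/-- A saturated empire (over scalar laws): the reachable part of the data `(q0, δ0)`. -/
def saturatedEmpire {Place Trans State : Type*}
    (q0 : Set (Set Place) × (State → Prop))
    (δ0 : Set (Set Place) × (State → Prop) → Trans →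
      Option (Set (Set Place) × (State → Prop))) :
    EmpireData Place Trans State {q // EmpReach q0 δ0 q} :=
  restrictEmpire q0 δ0 Prod.snd Prod.fst

/-- The focused law `law_p(q) = ⋀ {φ_i | ∃ r ∈ terr(q). i ∈ ℓ(q,r) ∧ p ∈ r}`. -/
def lawP {Place State : Type*} {n : ℕ}
    (ℓ : Set (Set Place) × (Fin n → State → Prop) → Set Place → Set (Fin n))
    (q : Set (Set Place) × (Fin n → State → Prop)) (p : Place) : State → Prop :=
  fun s => ∀ i, (∃ r ∈ q.1, i ∈ ℓ q r ∧ p ∈ r) → q.2 i s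

/-- `law_X(q) = ⋀_{p ∈ X} law_p(q)`. -/
def lawX {Place State : Type*} {n : ℕ}
    (ℓ : Set (Set Place) × (Fin n → State → Prop) → Set Place → Set (Fin n))
    (q : Set (Set Place) × (Fin n → State → Prop)) (X : Set Place) : State → Prop :=
  fun s => ∀ p ∈ X, lawP ℓ q p s

/-- The focused imperial Owicki-Gries annotation `OG_{E,ℓ}` of the saturated empire
given by `(q0, δ0)` (restricted to its reachable part) with focus `ℓ`:
`ω(p) = ⋁_{q ∈ Q_p} (g = q ∧ law_p(q))`. -/
def focusedOG {Place Trans State : Type*} {n : ℕ}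
    (q0 : Set (Set Place) × (Fin n → State → Prop))
    (δ0 : Set (Set Place) × (Fin n → State → Prop) → Trans →
      Option (Set (Set Place) × (Fin n → State → Prop)))
    (ℓ : Set (Set Place) × (Fin n → State → Prop) → Set Place → Set (Fin n)) :
    OG Place Trans State {q // EmpReach q0 δ0 q} where
  ω := fun p s g => ∃ q : {q // EmpReach q0 δ0 q},
    (∃ r ∈ q.val.1, p ∈ r) ∧ g = q ∧ lawP ℓ q.val p s
  γ := fun t _ g => (restrictδ q0 δ0 g t).getD g
  ρ := ⟨q0, EmpReach.init⟩

end GhostsOfEmpires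

/-!
Every reachable state `⟨τ, φ⟩` of a saturated empire is sound for the abstract semantics: all
regions of `τ` are nonempty and every marking of the treaty `⟦τ⟧` is reachable together with
the abstract value `φ`. This holds for `⟨τ_init, ⊤⟩`; a member of `⟦replace(t, τ)⟧` arises by
firing `t` from a member of `⟦τ⟧`; and a member of `⟦extend(t, τ)⟧` either is a member of `⟦τ⟧`
or arises from one by firing `t`, which leaves `φ` unchanged. Moreover `φ` is satisfiable, since
`δ` is undefined when `post` yields `⊥`. An error place in a region of `τ` would lie in a member
of `⟦τ⟧`, whose abstract value is `⊥` by safety of the domain.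
-/

namespace GhostsOfEmpires

section Treaty

variable {α : Type*} {τ τ₁ τ₂ : Set (Set α)} {m m₁ m₂ : Set α}

theorem inTreaty_iff_image :
    InTreaty τ m ↔ ∃ g : Set α → α, (∀ r ∈ τ, g r ∈ r) ∧ m = g '' τ := by
  have h : ∀ g : Set α → α, {x | ∃ r ∈ τ, x = g r} = g '' τ := fun g => by
    ext; simp [eq_comm]
  simp only [InTreaty, h]

theorem inTreaty_image {g : Set α → α} (hg : ∀ r ∈ τ, g r ∈ r) : InTreaty τ (g '' τ) :=
  inTreaty_iff_image.2 ⟨g, hg, rfl⟩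

theorem inTreaty_singleton {r : Set α} {x : α} (hx : x ∈ r) : InTreaty {r} {x} := by
  simpa using inTreaty_image (τ := {r}) (g := fun _ => x) (by simpa)

theorem InTreaty.union (h₁ : InTreaty τ₁ m₁) (h₂ : InTreaty τ₂ m₂) (hd : Disjoint τ₁ τ₂) :
    InTreaty (τ₁ ∪ τ₂) (m₁ ∪ m₂) := by
  classical
  obtain ⟨g₁, hg₁, rfl⟩ := inTreaty_iff_image.1 h₁
  obtain ⟨g₂, hg₂, rfl⟩ := inTreaty_iff_image.1 h₂
  have e₁ : Set.EqOn (τ₁.piecewise g₁ g₂) g₁ τ₁ := Set.piecewise_eqOn _ _ _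
  have e₂ : Set.EqOn (τ₁.piecewise g₁ g₂) g₂ τ₂ :=
    (Set.piecewise_eqOn_compl _ _ _).mono hd.subset_compl_left
  rw [← e₁.image_eq, ← e₂.image_eq, ← Set.image_union]
  refine inTreaty_image ?_
  rintro r (hr | hr)
  · rw [e₁ hr]; exact hg₁ r hr
  · rw [e₂ hr]; exact hg₂ r hr

theorem exists_inTreaty_mem (hne : ∀ r ∈ τ, r.Nonempty) {r : Set α} (hr : r ∈ τ) {x : α}
    (hx : x ∈ r) : ∃ m, InTreaty τ m ∧ x ∈ m := by
  classical
  have : Nonempty α := ⟨x⟩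
  let g : Set α → α := fun r' => if x ∈ r' then x else Classical.epsilon (· ∈ r')
  refine ⟨g '' τ, inTreaty_image fun r' hr' => ?_, r, hr, if_pos hx⟩
  by_cases h : x ∈ r'
  · simpa only [g, if_pos h]
  · simpa only [g, if_neg h] using Classical.epsilon_spec (hne r' hr')

theorem image_singletons {s : Set α} {g : Set α → α}
    (hg : ∀ r ∈ {r | ∃ x ∈ s, r = {x}}, g r ∈ r) : g '' {r | ∃ x ∈ s, r = {x}} = s := by
  have hg' : ∀ x ∈ s, g {x} = x := fun x hx => hg {x} ⟨x, hx, rfl⟩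
  ext x
  constructor
  · rintro ⟨_, ⟨y, hy, rfl⟩, rfl⟩
    rwa [hg' y hy]
  · exact fun hx => ⟨{x}, ⟨x, hx, rfl⟩, hg' x hx⟩

end Treaty

namespace PetriNet

variable {Place Trans Stmt State : Type*}

structure TreatyAbsReach (N : PetriNet Place Trans Stmt State) {Φ : Type*}
    (postA : Φ → Trans → Φ) (φtop : Φ) (τ : Set (Set Place)) (φ : Φ) : Prop where
  nonempty : ∀ r ∈ τ, r.Nonempty
  absReach : ∀ m, InTreaty τ m → N.AbsReachG postA φtop m φ

variable {N : PetriNet Place Trans Stmt State} {Φ : Type*} {postA : Φ → Trans → Φ}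
  {φtop φ : Φ} {τ τ' : Set (Set Place)} {t : Trans} {m m' : Set Place} {p p' : Place}

theorem FiringSeq.append_fires {m₀ : Set Place} {ts : List Trans} (h : N.FiringSeq m₀ ts m) :
    N.fires m t m' → N.FiringSeq m₀ (ts ++ [t]) m' := by
  induction h with
  | nil => exact fun ht => .cons ht (.nil _)
  | cons hf _ ih => exact fun ht => .cons hf (ih ht)

theorem Reachable.fires (h : N.Reachable m) (ht : N.fires m t m') : N.Reachable m' :=
  let ⟨ts, hts⟩ := h
  ⟨ts ++ [t], hts.append_fires ht⟩

theorem AbsReachG.reachable (h : N.AbsReachG postA φtop m φ) : N.Reachable m := by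
  induction h with
  | init => exact ⟨[], .nil _⟩
  | step _ ht ih => exact ih.fires ht

theorem inTreaty_pre_of_terrEnabled [Nonempty Place] (hen : N.terrEnabled t τ) :
    InTreaty (τ \ N.bystanders t τ) (N.pre t) := by
  classical
  obtain ⟨f, hf, hinj⟩ := hen
  have hf_mem : ∀ x ∈ N.pre t, f x ∈ τ \ N.bystanders t τ := fun x hx =>
    ⟨(hf x hx).1, fun hb => (Set.eq_empty_iff_forall_notMem.1 hb.2) x ⟨(hf x hx).2, hx⟩⟩
  let g : Set Place → Place := fun r =>
    if h : ∃ x ∈ N.pre t, f x = r then h.choose else Classical.epsilon (· ∈ r ∩ N.pre t)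
  have hg_f : ∀ x ∈ N.pre t, g (f x) = x := fun x hx => by
    have h : ∃ y ∈ N.pre t, f y = f x := ⟨x, hx, rfl⟩
    simp only [g, dif_pos h]
    by_contra hne
    exact hinj _ h.choose_spec.1 _ hx hne h.choose_spec.2
  have hg : ∀ r ∈ τ \ N.bystanders t τ, g r ∈ r ∩ N.pre t := fun r hr => by
    by_cases h : ∃ x ∈ N.pre t, f x = r
    · obtain ⟨x, hx, rfl⟩ := h
      rw [hg_f x hx]
      exact ⟨(hf x hx).2, hx⟩
    · simp only [g, dif_neg h]
      exact Classical.epsilon_spec (Set.nonempty_iff_ne_empty.2 fun h' => hr.2 ⟨hr.1, h'⟩)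
  refine inTreaty_iff_image.2 ⟨g, fun r hr => (hg r hr).1, ?_⟩
  refine subset_antisymm (fun x hx => ⟨f x, hf_mem x hx, hg_f x hx⟩) ?_
  rintro _ ⟨r, hr, rfl⟩
  exact (hg r hr).2

theorem treatyAbsReach_tauInit : N.TreatyAbsReach postA φtop N.tauInit φtop where
  nonempty := by
    rintro _ ⟨x, -, rfl⟩
    exact Set.singleton_nonempty x
  absReach m hm := by
    obtain ⟨g, hg, rfl⟩ := inTreaty_iff_image.1 hm
    rw [tauInit, image_singletons hg]
    exact .init

theorem TreatyAbsReach.replaceT (h : N.TreatyAbsReach postA φtop τ φ)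
    (hen : N.terrEnabled t τ) : N.TreatyAbsReach postA φtop (N.replaceT t τ) (postA φ t) where
  nonempty := by
    rintro r (hr | ⟨x, -, rfl⟩)
    exacts [h.nonempty r hr.1, Set.singleton_nonempty x]
  absReach m hm := by
    obtain ⟨g, hg, rfl⟩ := inTreaty_iff_image.1 hm
    have : Nonempty Place := ⟨g ∅⟩
    set B := N.bystanders t τ
    have hB : InTreaty B (g '' B) := inTreaty_image fun r hr => hg r (Or.inl hr)
    have hτ : InTreaty τ (g '' B ∪ N.pre t) := by
      have hsplit : B ∪ τ \ B = τ := Set.union_sdiff_cancel (Set.sep_subset _ _)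
      rw [← hsplit]
      exact hB.union (inTreaty_pre_of_terrEnabled hen) Set.disjoint_sdiff_right
    have hBpre : Disjoint (g '' B) (N.pre t) := by
      rw [Set.disjoint_left]
      rintro _ ⟨r, hr, rfl⟩ hpre
      exact (Set.eq_empty_iff_forall_notMem.1 hr.2) _ ⟨hg r (Or.inl hr), hpre⟩
    have hfires : N.fires (g '' B ∪ N.pre t) t (g '' N.replaceT t τ) := by
      refine ⟨Set.subset_union_right, ?_⟩
      rw [PetriNet.replaceT, Set.image_union, image_singletons fun r hr => hg r (Or.inr hr),
        Set.union_sdiff_right, hBpre.sdiff_eq_left]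
    exact .step (h.absReach _ hτ) hfires

theorem not_coRelated_of_extendable (hext : N.extendable t τ) (hpre : N.pre t = {p})
    (hpost : N.post t = {p'}) {r : Set Place} (hr : r ∈ τ) (hp : p ∈ r) {q : Place}
    (hq : q ∈ r) : ¬ N.coRelated p q := by
  rintro ⟨hpq, m, hm, hpm, hqm⟩
  have hmeet : (r ∩ N.pre t).Nonempty := ⟨p, hp, hpre ▸ rfl⟩
  have hp' : p' ∈ N.post t := hpost ▸ rfl
  by_cases hqp' : q = p'
  · subst hqp'
    exact hext.2.2.2 r hr hmeet p hp q hp' ⟨hpq.symm, m, hm, hqm, hpm⟩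
  · have hfire : N.fires m t (m \ N.pre t ∪ N.post t) :=
      ⟨hpre ▸ Set.singleton_subset_iff.2 hpm, rfl⟩
    refine hext.2.2.2 r hr hmeet q hq p' hp'
      ⟨Ne.symm hqp', _, hm.fires hfire, Or.inr hp', Or.inl ⟨hqm, ?_⟩⟩
    rw [hpre]
    exact Ne.symm hpq

theorem TreatyAbsReach.eq_of_extendable (h : N.TreatyAbsReach postA φtop τ φ)
    (hext : N.extendable t τ) (hpre : N.pre t = {p}) (hpost : N.post t = {p'})
    {r₁ r₂ : Set Place} (hr₁ : r₁ ∈ τ) (hr₂ : r₂ ∈ τ) (hp₁ : p ∈ r₁) (hp₂ : p ∈ r₂) :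
    r₁ = r₂ := by
  have key : ∀ {r₁ r₂}, r₁ ∈ τ → r₂ ∈ τ → p ∈ r₁ → p ∈ r₂ → r₁ ⊆ r₂ := by
    intro r₁ r₂ hr₁ hr₂ hp₁ hp₂ q hq
    by_contra hq₂
    have hr₂' : r₂ ∈ τ \ {r₁} := ⟨hr₂, fun e => hq₂ (e ▸ hq)⟩
    obtain ⟨m, hm, hpm⟩ := exists_inTreaty_mem (fun r hr => h.nonempty r hr.1) hr₂' hp₂
    have hqm : InTreaty τ (insert q m) := by
      simpa only [Set.singleton_union, Set.union_sdiff_cancel (Set.singleton_subset_iff.2 hr₁)]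
        using (inTreaty_singleton hq).union hm Set.disjoint_sdiff_right
    exact not_coRelated_of_extendable hext hpre hpost hr₁ hp₁ hq
      ⟨fun e => hq₂ (e ▸ hp₂), _, (h.absReach _ hqm).reachable, Set.mem_insert_of_mem _ hpm,
        Set.mem_insert _ _⟩
  exact (key hr₁ hr₂ hp₁ hp₂).antisymm (key hr₂ hr₁ hp₂ hp₁)

theorem TreatyAbsReach.extendT (h : N.TreatyAbsReach postA φtop τ φ) (hext : N.extendable t τ)
    (hfix : postA φ t = φ) : N.TreatyAbsReach postA φtop (N.extendT t τ) φ := by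
  have ⟨⟨f, hf, _⟩, ⟨p, hpre⟩, ⟨p', hpost⟩, _⟩ := hext
  obtain ⟨hr₀, hpr₀⟩ := hf p (by rw [hpre]; rfl)
  set r₀ := f p
  set B := N.bystanders t τ
  have hmeet : ∀ {r}, (r ∩ N.pre t).Nonempty ↔ p ∈ r := by simp [hpre]
  have hmem_B : ∀ r ∈ τ, r ∈ B ↔ p ∉ r := fun r hr => by
    rw [← hmeet, Set.not_nonempty_iff_eq_empty]
    exact and_iff_right hr
  have huniq : ∀ r ∈ τ, p ∈ r → r = r₀ := fun r hr hpr =>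
    h.eq_of_extendable hext hpre hpost hr hr₀ hpr hpr₀
  have hτ : τ = insert r₀ B := by
    ext r
    refine ⟨fun hr => ?_, ?_⟩
    · by_cases hpr : p ∈ r
      exacts [Or.inl (huniq r hr hpr), Or.inr ((hmem_B r hr).2 hpr)]
    · rintro (rfl | hr)
      exacts [hr₀, hr.1]
  have hr₀B : r₀ ∉ B := fun hB => (hmem_B r₀ hr₀).1 hB hpr₀
  have hE : N.extendT t τ = insert (r₀ ∪ {p'}) B := by
    rw [PetriNet.extendT, hpost, Set.union_comm, Set.insert_eq]
    congr 1
    ext r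
    simp only [Set.mem_ofPred_eq, Set.mem_singleton_iff, hmeet]
    constructor
    · rintro ⟨r, hr, hpr, rfl⟩
      rw [huniq r hr hpr]
    · rintro rfl
      exact ⟨r₀, hr₀, hpr₀, rfl⟩
  refine ⟨?_, fun m hm => ?_⟩
  · rw [hE]
    rintro r (rfl | hr)
    exacts [⟨p, Or.inl hpr₀⟩, h.nonempty r hr.1]
  obtain ⟨g, hg, rfl⟩ := inTreaty_iff_image.1 hm
  rw [hE] at hg ⊢
  rw [Set.image_insert_eq]
  have hB : InTreaty B (g '' B) := inTreaty_image fun r hr => hg r (Or.inr hr)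
  have hins : ∀ y ∈ r₀, N.AbsReachG postA φtop (insert y (g '' B)) φ := fun y hy =>
    h.absReach _ <| by
      rw [hτ, Set.insert_eq, Set.insert_eq]
      exact (inTreaty_singleton hy).union hB (Set.disjoint_singleton_left.2 hr₀B)
  rcases hg _ (Set.mem_insert _ _) with hx | hx
  · exact hins _ hx
  -- the extended region picks `p'`: fire `t` from the member picking `p` instead
  rw [Set.mem_singleton_iff.1 hx]
  have hpB : p ∉ g '' B := by
    rintro ⟨r, hr, hgr⟩
    exact (hmem_B r hr.1).1 hr (hgr ▸ hg r (Or.inr hr))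
  have hfires : N.fires (insert p (g '' B)) t (insert p' (g '' B)) := by
    refine ⟨hpre ▸ Set.singleton_subset_iff.2 (Set.mem_insert _ _), ?_⟩
    rw [hpre, hpost, Set.insert_sdiff_of_mem _ (Set.mem_singleton p),
      Set.sdiff_singleton_eq_self hpB, Set.union_singleton]
  simpa only [hfix] using (hins p hpr₀).step hfires

theorem TreatyAbsReach.saturate {rb : Set (Set Place)} (h : N.TreatyAbsReach postA φtop τ φ)
    (hs : N.SaturateG postA φ rb τ τ') : N.TreatyAbsReach postA φtop τ' φ := by
  induction hs with
  | base _ => exact h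
  | step hext _ hfix _ _ ih => exact ih (h.extendT hext hfix)

section Saturated

variable {interp : Φ → State → Prop} {q0 q q' : Set (Set Place) × Φ}
  {δ0 : Set (Set Place) × Φ → Trans → Option (Set (Set Place) × Φ)}

theorem IsSaturatedG.cases_of_δ_eq_some (hsat : N.IsSaturatedG postA interp φtop q0 δ0)
    (hδ : δ0 q t = some q') :
    N.terrEnabled t q.1 ∧ (∃ s, interp (postA q.2 t) s) ∧
      (q' = q ∨ q'.2 = postA q.2 t ∧
        N.SaturateG postA (postA q.2 t) (N.bystanders t q.1) (N.replaceT t q.1) q'.1) := by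
  obtain ⟨τ, φ⟩ := q
  have hen : N.terrEnabled t τ := by
    by_contra hn
    simp [hsat.undefCond τ φ t (Or.inl hn)] at hδ
  have hs : ∃ s, interp (postA φ t) s := by
    by_contra hn
    simp [hsat.undefCond τ φ t (Or.inr (not_exists.1 hn))] at hδ
  refine ⟨hen, hs, ?_⟩
  by_cases hfix : N.terrFires τ t τ ∧ postA φ t = φ
  · rw [hsat.selfCond τ φ t hen hs hfix.1 hfix.2, Option.some_inj] at hδ
    exact Or.inl hδ.symm
  · obtain ⟨τ', hτ', hδ'⟩ := hsat.stepCond τ φ t hen hs hfix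
    rw [hδ', Option.some_inj] at hδ
    subst hδ
    exact Or.inr ⟨rfl, hτ'⟩

theorem IsSaturatedG.exists_interp_law (hsat : N.IsSaturatedG postA interp φtop q0 δ0)
    (htop : ∃ s, interp φtop s) (hq : EmpReach q0 δ0 q) : ∃ s, interp q.2 s := by
  induction hq with
  | init =>
    obtain ⟨τ, -, rfl⟩ := hsat.initCond
    exact htop
  | step _ hδ ih =>
    obtain ⟨-, hs, rfl | ⟨hlaw, -⟩⟩ := hsat.cases_of_δ_eq_some hδ
    exacts [ih, hlaw ▸ hs]

theorem IsSaturatedG.treatyAbsReach (hsat : N.IsSaturatedG postA interp φtop q0 δ0)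
    (hq : EmpReach q0 δ0 q) : N.TreatyAbsReach postA φtop q.1 q.2 := by
  induction hq with
  | init =>
    obtain ⟨τ, hτ, rfl⟩ := hsat.initCond
    exact treatyAbsReach_tauInit.saturate hτ
  | step _ hδ ih =>
    obtain ⟨hen, -, rfl | ⟨hlaw, hτ'⟩⟩ := hsat.cases_of_δ_eq_some hδ
    exacts [ih, hlaw ▸ (ih.replaceT hen).saturate hτ']

end Saturated

end PetriNet

end GhostsOfEmpires

open GhostsOfEmpires in
theorem statement17_general {Place Trans Stmt State : Type*}
    [Nonempty State]
    (N : PetriNet Place Trans Stmt State)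
    (D : N.InvDomain) (hD : N.SafeDomain D)
    (q0 : Set (Set Place) × (State → Prop))
    (δ0 : Set (Set Place) × (State → Prop) → Trans →
      Option (Set (Set Place) × (State → Prop)))
    (hsat : N.IsSaturatedG D.postF (fun φ => φ) (fun _ => True) q0 δ0)
    (p : Place) (hp : p ∈ N.err) :
    ¬ ∃ q : Set (Set Place) × (State → Prop),
        EmpReach q0 δ0 q ∧ ∃ r ∈ q.1, p ∈ r := by
  rintro ⟨q, hq, r, hr, hpr⟩
  obtain ⟨s, hs⟩ := hsat.exists_interp_law ⟨Classical.arbitrary State, trivial⟩ hq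
  have hsound := hsat.treatyAbsReach hq
  obtain ⟨m, hm, hpm⟩ := exists_inTreaty_mem hsound.nonempty hr hpr
  exact hD m q.2 (hsound.absReach m hm) ⟨p, hpm, hp⟩ s hs

open GhostsOfEmpires in
/-- For a saturated empire `E` and each error place `p ∈ Err`, there
exists no state `q ∈ Q` such that `p` lies in some region of `terr(q)`. -/
theorem statement17 {Place Trans Stmt State : Type*}
    [Fintype Place] [Fintype Trans] [Fintype Stmt] [Nonempty State]
    (N : PetriNet Place Trans Stmt State)
    (D : N.InvDomain) (hD : N.SafeDomain D)
    (q0 : Set (Set Place) × (State → Prop))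
    (δ0 : Set (Set Place) × (State → Prop) → Trans →
      Option (Set (Set Place) × (State → Prop)))
    (hsat : N.IsSaturatedG D.postF (fun φ => φ) (fun _ => True) q0 δ0)
    (p : Place) (hp : p ∈ N.err) :
    ¬ ∃ q : Set (Set Place) × (State → Prop),
        EmpReach q0 δ0 q ∧ ∃ r ∈ q.1, p ∈ r :=
  statement17_general N D hD q0 δ0 hsat p hp
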